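/- Let m be a positive natural number and for each i ∈ Fin m let E i be a finite-dimensional real inner product space, f i : E i → ℝ a twice continuously differentiable function, and λ i a real number with Δ(f i) = (λ i)·(f i). Define g on the L² product space PiLp 2 E by g(x) = ∏_{i} f i (x i). Then Δg = (∑_{i} λ i)·g. -/

import Mathlib

/-!
The Laplacian can be computed in any orthonormal basis. In the product basis of `PiLp 2 E`,
assembled from orthonormal bases of the factors, the second derivative of `∏ j, f j (x j)` along
a basis vector of the `i`-th factor only differentiates `f i`, so the `i`-th block of the sum is
`(∏ j ≠ i, f j (x j)) * Δ (f i) (x i) = lam i * g x`.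
-/

/-- The Laplacian of a real-valued function on a finite-dimensional real inner
product space: the sum of the second directional derivatives along an
orthonormal basis. -/
noncomputable def laplacian {E : Type*} [NormedAddCommGroup E] [InnerProductSpace ℝ E]
    [FiniteDimensional ℝ E] (f : E → ℝ) (x : E) : ℝ :=
  ∑ i, fderiv ℝ (fun y => fderiv ℝ f y (stdOrthonormalBasis ℝ E i)) x
      (stdOrthonormalBasis ℝ E i)

open Finset

section SecondDerivative

variable {E F : Type*} [NormedAddCommGroup E] [NormedAddCommGroup F]

theorem ContDiff.differentiable_fderiv [NormedSpace ℝ E] [NormedSpace ℝ F] {f : E → F}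
    (hf : ContDiff ℝ 2 f) :
    Differentiable ℝ (fderiv ℝ f) :=
  (hf.fderiv_right one_add_one_eq_two.le).differentiable one_ne_zero

theorem fderiv_fderiv_apply_eq_iteratedFDeriv [NormedSpace ℝ E] [NormedSpace ℝ F] {f : E → F}
    {x : E} (hf : DifferentiableAt ℝ (fderiv ℝ f) x) (v w : E) :
    fderiv ℝ (fun y => fderiv ℝ f y v) x w = iteratedFDeriv ℝ 2 f x ![w, v] := by
  rw [iteratedFDeriv_two_apply, fderiv_clm_apply hf (differentiableAt_const v)]
  simp

theorem laplacian_eq_sum_orthonormalBasis [InnerProductSpace ℝ E] [FiniteDimensional ℝ E]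
    {f : E → ℝ} {x : E} (hf : DifferentiableAt ℝ (fderiv ℝ f) x) {ι : Type*} [Fintype ι]
    (b : OrthonormalBasis ι ℝ E) :
    laplacian f x = ∑ i, fderiv ℝ (fun y => fderiv ℝ f y (b i)) x (b i) := by
  simp only [laplacian, fderiv_fderiv_apply_eq_iteratedFDeriv hf]
  rw [← congrFun (InnerProductSpace.laplacian_eq_iteratedFDeriv_stdOrthonormalBasis f) x,
    congrFun (InnerProductSpace.laplacian_eq_iteratedFDeriv_orthonormalBasis f b) x]

end SecondDerivative

namespace PiLp

variable {ι : Type*} [Fintype ι] {p : ENNReal} [Fact (1 ≤ p)] {E : ι → Type*}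
  [∀ i, NormedAddCommGroup (E i)] [∀ i, NormedSpace ℝ (E i)]

section
variable {F : Type*} [NormedAddCommGroup F] [NormedSpace ℝ F] {i : ι} {w : E i → F}
  {y : PiLp p E}

theorem hasFDerivAt_comp_apply {w' : E i →L[ℝ] F} (hw : HasFDerivAt w w' (y i)) :
    HasFDerivAt (fun y : PiLp p E => w (y i)) (w'.comp (proj p E i)) y :=
  hw.comp y (hasFDerivAt_apply p y i)

theorem fderiv_comp_apply (hw : DifferentiableAt ℝ w (y i)) (v : PiLp p E) :
    fderiv ℝ (fun y : PiLp p E => w (y i)) y v = fderiv ℝ w (y i) (v i) := by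
  rw [(hasFDerivAt_comp_apply hw.hasFDerivAt).fderiv]
  rfl

end

variable [DecidableEq ι] {u : ∀ i, E i → ℝ} {s : Finset ι} {y : PiLp p E}

theorem fderiv_prod_apply (hu : ∀ i ∈ s, DifferentiableAt ℝ (u i) (y i)) (v : PiLp p E) :
    fderiv ℝ (fun y : PiLp p E => ∏ i ∈ s, u i (y i)) y v
      = ∑ i ∈ s, (∏ j ∈ s.erase i, u j (y j)) * fderiv ℝ (u i) (y i) (v i) := by
  have hcomp : ∀ i ∈ s, DifferentiableAt ℝ (fun y : PiLp p E => u i (y i)) y := fun i hi =>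
    (hasFDerivAt_comp_apply (hu i hi).hasFDerivAt).differentiableAt
  rw [fderiv_finsetProd hcomp, _root_.sum_apply]
  refine sum_congr rfl fun i hi => ?_
  rw [_root_.smul_apply, fderiv_comp_apply (hu i hi), smul_eq_mul]

theorem fderiv_prod_single_of_mem (hu : ∀ i ∈ s, DifferentiableAt ℝ (u i) (y i)) {i : ι}
    (hi : i ∈ s) (e : E i) :
    fderiv ℝ (fun y : PiLp p E => ∏ j ∈ s, u j (y j)) y (single p i e)
      = (∏ j ∈ s.erase i, u j (y j)) * fderiv ℝ (u i) (y i) e := by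
  rw [fderiv_prod_apply hu, sum_eq_single_of_mem i hi]
  · simp
  · intro j _ hji
    simp [hji]

theorem fderiv_prod_single_of_notMem (hu : ∀ i ∈ s, DifferentiableAt ℝ (u i) (y i)) {i : ι}
    (hi : i ∉ s) (e : E i) :
    fderiv ℝ (fun y : PiLp p E => ∏ j ∈ s, u j (y j)) y (single p i e) = 0 := by
  rw [fderiv_prod_apply hu]
  refine sum_eq_zero fun j hj => ?_
  simp [show j ≠ i from fun h => hi (h ▸ hj)]

theorem fderiv_fderiv_prod_single (hu : ∀ i, Differentiable ℝ (u i)) {x : PiLp p E} {i : ι}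
    (hui : DifferentiableAt ℝ (fderiv ℝ (u i)) (x i)) (e : E i) :
    fderiv ℝ (fun y => fderiv ℝ (fun y : PiLp p E => ∏ j, u j (y j)) y (single p i e)) x
        (single p i e)
      = (∏ j ∈ univ.erase i, u j (x j)) * fderiv ℝ (fun z => fderiv ℝ (u i) z e) (x i) e := by
  simp_rw [fderiv_prod_single_of_mem (fun j _ => hu j _) (mem_univ i)]
  have hdir : DifferentiableAt ℝ (fun z => fderiv ℝ (u i) z e) (x i) :=
    hui.clm_apply (differentiableAt_const e)
  have hrest : DifferentiableAt ℝ (fun y : PiLp p E => ∏ j ∈ univ.erase i, u j (y j)) x :=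
    (HasFDerivAt.finsetProd fun j _ =>
      hasFDerivAt_comp_apply (hu j (x j)).hasFDerivAt).differentiableAt
  rw [fderiv_fun_mul hrest (hasFDerivAt_comp_apply hdir.hasFDerivAt).differentiableAt]
  simp [fderiv_prod_single_of_notMem (fun j _ => hu j _) (notMem_erase i univ),
    fderiv_comp_apply hdir]

end PiLp

theorem laplacian_prod_piLp {ι : Type*} [Fintype ι] [DecidableEq ι] {E : ι → Type*}
    [∀ i, NormedAddCommGroup (E i)] [∀ i, InnerProductSpace ℝ (E i)]
    [∀ i, FiniteDimensional ℝ (E i)] {u : ∀ i, E i → ℝ} (hu : ∀ i, ContDiff ℝ 2 (u i))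
    (x : PiLp 2 E) :
    laplacian (fun y : PiLp 2 E => ∏ i, u i (y i)) x
      = ∑ i, (∏ j ∈ univ.erase i, u j (x j)) * laplacian (u i) (x i) := by
  have hprod : ContDiff ℝ 2 (fun y : PiLp 2 E => ∏ i, u i (y i)) :=
    contDiff_prod fun i _ => (hu i).comp (PiLp.proj (𝕜 := ℝ) 2 E i).contDiff
  rw [laplacian_eq_sum_orthonormalBasis (hprod.differentiable_fderiv x)
    (Pi.orthonormalBasis fun i => stdOrthonormalBasis ℝ (E i)), Fintype.sum_sigma]
  refine sum_congr rfl fun i _ => ?_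
  simp only [Pi.orthonormalBasis_apply, PiLp.fderiv_fderiv_prod_single
    (fun j => (hu j).differentiable two_ne_zero) ((hu i).differentiable_fderiv _), ← mul_sum]
  rfl

theorem laplacian_eigenfunction_pi_general
    (m : ℕ) (E : Fin m → Type*)
    [∀ i, NormedAddCommGroup (E i)] [∀ i, InnerProductSpace ℝ (E i)]
    [∀ i, FiniteDimensional ℝ (E i)]
    (f : ∀ i, E i → ℝ) (hf : ∀ i, ContDiff ℝ 2 (f i))
    (lam : Fin m → ℝ)
    (heig : ∀ i, ∀ x : E i, laplacian (f i) x = lam i * f i x)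
    (g : PiLp 2 E → ℝ) (hg : ∀ x : PiLp 2 E, g x = ∏ i, f i (x i)) :
    ∀ x : PiLp 2 E, laplacian g x = (∑ i, lam i) * g x := by
  obtain rfl : g = fun y => ∏ i, f i (y i) := funext hg
  intro x
  rw [laplacian_prod_piLp hf, sum_mul]
  refine sum_congr rfl fun i _ => ?_
  rw [heig, mul_left_comm, prod_erase_mul _ _ (mem_univ i)]

/-- The product of Laplacian eigenfunctions of `m` factors is a Laplacian
eigenfunction on the `L²` product space `PiLp 2 E`, whose eigenvalue is the sum
of the factor eigenvalues. -/
theorem laplacian_eigenfunction_pi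
    (m : ℕ) (hm : 0 < m) (E : Fin m → Type*)
    [∀ i, NormedAddCommGroup (E i)] [∀ i, InnerProductSpace ℝ (E i)]
    [∀ i, FiniteDimensional ℝ (E i)]
    (f : ∀ i, E i → ℝ) (hf : ∀ i, ContDiff ℝ 2 (f i))
    (lam : Fin m → ℝ)
    (heig : ∀ i, ∀ x : E i, laplacian (f i) x = lam i * f i x)
    (g : PiLp 2 E → ℝ) (hg : ∀ x : PiLp 2 E, g x = ∏ i, f i (x i)) :
    ∀ x : PiLp 2 E, laplacian g x = (∑ i, lam i) * g x :=
  laplacian_eigenfunction_pi_general m E f hf lam heig g hg
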